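/- arXiv:2404.14800 — 5 statements merged into one kernel-verified Lean document; each statement's English description precedes it below -/
import Mathlib

section
/- Let f, g : H → (-∞,+∞] be proper, lsc, ρ-strongly convex (ρ > 0), and h convex differentiable with L-Lipschitz gradient, where 2ρ > L. If x₁ and x₂ both satisfy 0 ∈ ∂f(x) + ∂g(x) - ∇h(x), then x₁ = x₂. -/
open InnerProductSpace Filter

section Defs
variable {H : Type*} [NormedAddCommGroup H] [InnerProductSpace ℝ H] [CompleteSpace H]

def ProperE (f : H → EReal) : Prop := (∀ x, f x ≠ ⊥) ∧ ∃ x, f x ≠ ⊤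

def ConvexE (f : H → EReal) : Prop :=
  ∀ x y : H, ∀ a b : ℝ, 0 ≤ a → 0 ≤ b → a + b = 1 →
    f (a • x + b • y) ≤ (a : EReal) * f x + (b : EReal) * f y

def StrongConvexE (ρ : ℝ) (f : H → EReal) : Prop :=
  ConvexE (fun x => f x - ((ρ / 2 * ‖x‖ ^ 2 : ℝ) : EReal))

def SubdiffE (f : H → EReal) (x : H) : Set H :=
  {u | ∀ z, f x + ((inner ℝ (z - x) u : ℝ) : EReal) ≤ f z}

def IsProx (β : ℝ) (f : H → EReal) (u y : H) : Prop :=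
  ∀ v, f y + ((1 / (2 * β) * ‖y - u‖ ^ 2 : ℝ) : EReal)
      ≤ f v + ((1 / (2 * β) * ‖v - u‖ ^ 2 : ℝ) : EReal)

def StationaryPt (f g : H → EReal) (h' : H → H) (x : H) : Prop :=
  ∃ u ∈ SubdiffE f x, ∃ v ∈ SubdiffE g x, u + v - h' x = 0

def WeakTendsto (x : ℕ → H) (p : H) : Prop :=
  ∀ φ : H →L[ℝ] ℝ, Tendsto (fun n => φ (x n)) atTop (nhds (φ p))

end Defs

open scoped RealInnerProductSpace Topology

/-!
The subdifferential of a `ρ`-strongly convex function is `ρ`-strongly monotone, so `∂f + ∂g` is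
`2ρ`-strongly monotone. At a stationary point `xᵢ` the gradient `∇h(xᵢ)` lies in `(∂f + ∂g)(xᵢ)`, hence
`2ρ‖x₁ - x₂‖² ≤ ⟪x₁ - x₂, ∇h(x₁) - ∇h(x₂)⟫ ≤ L‖x₁ - x₂‖²`, which forces `x₁ = x₂` when `L < 2ρ`.
-/

section Subdifferential

variable {H : Type*} [NormedAddCommGroup H] [InnerProductSpace ℝ H] {f : H → EReal} {ρ : ℝ}

theorem norm_smul_add_smul_sq (x z : H) {a b : ℝ} (hab : a + b = 1) :
    ‖a • x + b • z‖ ^ 2 = a * ‖x‖ ^ 2 + b * ‖z‖ ^ 2 - a * b * ‖x - z‖ ^ 2 := by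
  rw [norm_add_sq_real, norm_sub_sq_real, norm_smul, norm_smul, real_inner_smul_left,
    real_inner_smul_right, mul_pow, mul_pow, Real.norm_eq_abs, Real.norm_eq_abs, sq_abs, sq_abs]
  obtain rfl := eq_sub_of_add_eq hab
  ring

theorem ProperE.exists_coe_eq_of_mem_subdiffE (hf : ProperE f) {x u : H} (hu : u ∈ SubdiffE f x) :
    ∃ r : ℝ, f x = r := by
  obtain ⟨hbot, z, hz⟩ := hf
  refine ⟨(f x).toReal, (EReal.coe_toReal (fun htop => hz ?_) (hbot x)).symm⟩
  simpa [htop] using hu z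

theorem StrongConvexE.le_smul_add_smul (hf : StrongConvexE ρ f) {x z : H} {r s a b : ℝ}
    (hx : f x = r) (hz : f z = s) (ha : 0 ≤ a) (hb : 0 ≤ b) (hab : a + b = 1) :
    f (a • x + b • z) ≤ ((a * r + b * s - ρ / 2 * a * b * ‖x - z‖ ^ 2 : ℝ) : EReal) := by
  have hconv := hf x z a b ha hb hab
  simp only [hx, hz, ← EReal.coe_sub, ← EReal.coe_mul, ← EReal.coe_add] at hconv
  rw [EReal.sub_le_iff_le_add (.inr (EReal.coe_ne_top _)) (.inr (EReal.coe_ne_bot _)),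
    ← EReal.coe_add, norm_smul_add_smul_sq x z hab] at hconv
  convert hconv using 2
  ring

/-- Compare the subgradient inequality at `x + t (z - x)` with strong convexity, divide by `t`
and let `t → 0⁺`. -/
theorem StrongConvexE.add_inner_add_le (hf : StrongConvexE ρ f) {x z u : H}
    (hu : u ∈ SubdiffE f x) {r s : ℝ} (hx : f x = r) (hz : f z = s) :
    r + ⟪z - x, u⟫ + ρ / 2 * ‖z - x‖ ^ 2 ≤ s := by
  set φ : ℝ → ℝ := fun t => r + ⟪z - x, u⟫ + ρ / 2 * (1 - t) * ‖z - x‖ ^ 2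
  have hsegment : ∀ t ∈ Set.Ioc (0 : ℝ) 1, φ t ≤ s := by
    rintro t ⟨ht0, ht1⟩
    have hsub := hu ((1 - t) • x + t • z)
    have hdir : (1 - t) • x + t • z - x = t • (z - x) := by module
    rw [hdir, real_inner_smul_left, hx, ← EReal.coe_add] at hsub
    have hreal := EReal.coe_le_coe_iff.1
      (hsub.trans (hf.le_smul_add_smul hx hz (sub_nonneg.2 ht1) ht0.le (by ring)))
    rw [norm_sub_rev] at hreal
    exact le_of_mul_le_mul_left (by simp only [φ]; linarith) ht0
  have hlim : Tendsto φ (𝓝[>] 0) (𝓝 (φ 0)) :=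
    ((by fun_prop : Continuous φ).tendsto 0).mono_left nhdsWithin_le_nhds
  simpa [φ] using le_of_tendsto hlim (eventually_of_mem (Ioc_mem_nhdsGT one_pos) hsegment)

theorem StrongConvexE.mul_norm_sq_le_inner_sub (hfp : ProperE f) (hf : StrongConvexE ρ f)
    {x y u v : H} (hu : u ∈ SubdiffE f x) (hv : v ∈ SubdiffE f y) :
    ρ * ‖x - y‖ ^ 2 ≤ ⟪x - y, u - v⟫ := by
  obtain ⟨r, hr⟩ := hfp.exists_coe_eq_of_mem_subdiffE hu
  obtain ⟨s, hs⟩ := hfp.exists_coe_eq_of_mem_subdiffE hv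
  have hxy := hf.add_inner_add_le hu hr hs
  have hyx := hf.add_inner_add_le hv hs hr
  rw [norm_sub_rev, ← neg_sub x y, inner_neg_left] at hxy
  rw [inner_sub_right]
  linarith

end Subdifferential

theorem eq_of_lipschitzWith_of_mul_norm_sq_le_inner {H : Type*} [NormedAddCommGroup H]
    [InnerProductSpace ℝ H] {F : H → H} {K : NNReal} {μ : ℝ} (hF : LipschitzWith K F)
    (hKμ : (K : ℝ) < μ) {x y : H} (hmono : μ * ‖x - y‖ ^ 2 ≤ ⟪x - y, F x - F y⟫) : x = y := by
  have hlip : ⟪x - y, F x - F y⟫ ≤ K * ‖x - y‖ ^ 2 :=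
    calc ⟪x - y, F x - F y⟫ ≤ ‖x - y‖ * ‖F x - F y‖ := real_inner_le_norm _ _
      _ ≤ ‖x - y‖ * (K * ‖x - y‖) := by
          gcongr
          simpa only [dist_eq_norm] using hF.dist_le_mul x y
      _ = K * ‖x - y‖ ^ 2 := by ring
  have hsq : ‖x - y‖ ^ 2 ≤ 0 := by nlinarith
  rw [← sub_eq_zero, ← norm_eq_zero]
  exact pow_eq_zero_iff two_ne_zero |>.1 (le_antisymm hsq (sq_nonneg _))

theorem stationary_point_unique_general {H : Type*} [NormedAddCommGroup H] [InnerProductSpace ℝ H]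
    (f g : H → EReal) (h' : H → H) (ρ L : ℝ)
    (hL : 0 < L) (hρL : L < 2 * ρ)
    (hfp : ProperE f) (hfsc : StrongConvexE ρ f)
    (hgp : ProperE g) (hgsc : StrongConvexE ρ g)
    (hlip : LipschitzWith (Real.toNNReal L) h')
    (x₁ x₂ : H)
    (hx₁ : StationaryPt f g h' x₁) (hx₂ : StationaryPt f g h' x₂) :
    x₁ = x₂ := by
  obtain ⟨u₁, hu₁, v₁, hv₁, he₁⟩ := hx₁
  obtain ⟨u₂, hu₂, v₂, hv₂, he₂⟩ := hx₂
  have hmono : 2 * ρ * ‖x₁ - x₂‖ ^ 2 ≤ ⟪x₁ - x₂, h' x₁ - h' x₂⟫ := by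
    have hf := hfsc.mul_norm_sq_le_inner_sub hfp hu₁ hu₂
    have hg := hgsc.mul_norm_sq_le_inner_sub hgp hv₁ hv₂
    rw [← sub_eq_zero.1 he₁, ← sub_eq_zero.1 he₂, add_sub_add_comm, inner_add_right]
    linarith
  exact eq_of_lipschitzWith_of_mul_norm_sq_le_inner hlip
    (by rwa [Real.coe_toNNReal L hL.le]) hmono

theorem stationary_point_unique {H : Type*} [NormedAddCommGroup H] [InnerProductSpace ℝ H] [CompleteSpace H]
    (f g : H → EReal) (h : H → ℝ) (h' : H → H) (ρ L : ℝ)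
    (hρ : 0 < ρ) (hL : 0 < L) (hρL : L < 2 * ρ)
    (hfp : ProperE f) (hflsc : LowerSemicontinuous f) (hfsc : StrongConvexE ρ f)
    (hgp : ProperE g) (hglsc : LowerSemicontinuous g) (hgsc : StrongConvexE ρ g)
    (hconv : ConvexOn ℝ Set.univ h)
    (hgrad : ∀ x, HasGradientAt h (h' x) x)
    (hlip : LipschitzWith (Real.toNNReal L) h')
    (x₁ x₂ : H)
    (hx₁ : StationaryPt f g h' x₁) (hx₂ : StationaryPt f g h' x₂) :
    x₁ = x₂ :=
  stationary_point_unique_general f g h' ρ L hL hρL hfp hfsc hgp hgsc hlip x₁ x₂ hx₁ hx₂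
end

section
/- Let β > 0, f, g : H → (-∞,+∞] proper lsc convex, h convex differentiable. A point x satisfies 0 ∈ ∂f(x) + ∂g(x) - ∇h(x) if and only if there exists y ∈ H such that x = prox_{βf}(y) and x = prox_{βg}(2x - y + β∇h(x)). -/
open InnerProductSpace Filter

/-! `x = prox_{βf}(y)` exactly when `(y - x) / β ∈ ∂f(x)`: one direction is the subgradient
inequality plus a completed square, the other is the first-order optimality condition of the prox
problem along segments, which needs convexity. With `u = (y - x) / β` and
`v = (x - y) / β + ∇h(x)`, the two prox conditions say `u ∈ ∂f(x)`, `v ∈ ∂g(x)`, and `u + v = ∇h(x)`.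
-/

open scoped Topology

section Prox
variable {H : Type*} [NormedAddCommGroup H] {f : H → EReal} {β : ℝ} {u x : H}

lemma ProperE.ne_top_of_isProx (hf : ProperE f) (hp : IsProx β f u x) : f x ≠ ⊤ := by
  obtain ⟨-, z, hz⟩ := hf
  intro hx
  have h := hp z
  rw [hx, EReal.top_add_coe, top_le_iff] at h
  exact EReal.add_ne_top hz (EReal.coe_ne_top _) h

variable [InnerProductSpace ℝ H]

lemma ConvexE.le_lineMap {x z : H} {a b t : ℝ} (hf : ConvexE f) (hx : f x = a) (hz : f z = b)
    (ht₀ : 0 ≤ t) (ht₁ : t ≤ 1) :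
    f (x + t • (z - x)) ≤ (((1 - t) * a + t * b : ℝ) : EReal) := by
  have h := hf x z (1 - t) t (by linarith) ht₀ (by ring)
  rw [hx, hz, ← EReal.coe_mul, ← EReal.coe_mul, ← EReal.coe_add] at h
  convert h using 2
  module

lemma nonpos_of_forall_mul_le_sq_mul {c D : ℝ} (h : ∀ t, 0 < t → t ≤ 1 → t * c ≤ t ^ 2 * D) :
    c ≤ 0 := by
  have hlim : Tendsto (fun t => t * D) (𝓝[>] 0) (𝓝 0) :=
    tendsto_nhdsWithin_of_tendsto_nhds ((continuous_mul_const D).tendsto' 0 0 (zero_mul D))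
  refine ge_of_tendsto hlim ?_
  filter_upwards [Ioc_mem_nhdsGT one_pos] with t ⟨ht₀, ht₁⟩
  exact le_of_mul_le_mul_left (by nlinarith [h t ht₀ ht₁]) ht₀

lemma isProx_of_mem_subdiffE (hβ : 0 < β) (hu : β⁻¹ • (u - x) ∈ SubdiffE f x) :
    IsProx β f u x := by
  intro v
  -- the two sides differ by `‖v - x‖² / (2β)`
  have key : 1 / (2 * β) * ‖x - u‖ ^ 2
      ≤ inner ℝ (v - x) (β⁻¹ • (u - x)) + 1 / (2 * β) * ‖v - u‖ ^ 2 := by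
    have hvu : v - u = (v - x) - (u - x) := by abel
    rw [norm_sub_rev x u, hvu, real_inner_smul_right, norm_sub_sq_real (v - x) (u - x)]
    have hβ' : β⁻¹ = 2 * (1 / (2 * β)) := by field_simp
    rw [hβ']
    nlinarith [mul_nonneg (by positivity : (0 : ℝ) ≤ 1 / (2 * β)) (sq_nonneg ‖v - x‖)]
  calc f x + ((1 / (2 * β) * ‖x - u‖ ^ 2 : ℝ) : EReal)
      ≤ f x + ((inner ℝ (v - x) (β⁻¹ • (u - x)) + 1 / (2 * β) * ‖v - u‖ ^ 2 : ℝ) : EReal) := by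
        gcongr
    _ = (f x + ((inner ℝ (v - x) (β⁻¹ • (u - x)) : ℝ) : EReal))
          + ((1 / (2 * β) * ‖v - u‖ ^ 2 : ℝ) : EReal) := by
        rw [EReal.coe_add, add_assoc]
    _ ≤ f v + ((1 / (2 * β) * ‖v - u‖ ^ 2 : ℝ) : EReal) := by
        gcongr
        exact hu v

-- Test the prox inequality at `x + t • (z - x)` and let `t → 0⁺`.
lemma IsProx.mem_subdiffE (hβ : 0 < β) (hf : ProperE f) (hconv : ConvexE f)
    (hp : IsProx β f u x) : β⁻¹ • (u - x) ∈ SubdiffE f x := by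
  obtain ⟨a, ha⟩ : ∃ a : ℝ, f x = a :=
    ⟨_, (EReal.coe_toReal (hf.ne_top_of_isProx hp) (hf.1 x)).symm⟩
  intro z
  rcases eq_or_ne (f z) ⊤ with hz | hz
  · rw [hz]; exact le_top
  obtain ⟨b, hb⟩ : ∃ b : ℝ, f z = b := ⟨_, (EReal.coe_toReal hz (hf.1 z)).symm⟩
  have hβ' : β⁻¹ = 2 * (1 / (2 * β)) := by field_simp
  have key : a + β⁻¹ * inner ℝ (z - x) (u - x) - b ≤ 0 := by
    refine nonpos_of_forall_mul_le_sq_mul (D := 1 / (2 * β) * ‖z - x‖ ^ 2) fun t ht₀ ht₁ => ?_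
    have h := (hp (x + t • (z - x))).trans (add_le_add_left (hconv.le_lineMap ha hb ht₀.le ht₁) _)
    rw [ha, ← EReal.coe_add, ← EReal.coe_add, EReal.coe_le_coe_iff] at h
    have hv : x + t • (z - x) - u = (x - u) + t • (z - x) := by abel
    rw [hv, norm_add_sq_real, real_inner_smul_right, norm_smul, mul_pow, Real.norm_eq_abs,
      sq_abs, ← neg_sub u x, inner_neg_left, real_inner_comm] at h
    rw [hβ']
    nlinarith
  rw [ha, hb, real_inner_smul_right, ← EReal.coe_add, EReal.coe_le_coe_iff]
  linarith

lemma isProx_iff_mem_subdiffE (hβ : 0 < β) (hf : ProperE f) (hconv : ConvexE f) :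
    IsProx β f u x ↔ β⁻¹ • (u - x) ∈ SubdiffE f x :=
  ⟨IsProx.mem_subdiffE hβ hf hconv, isProx_of_mem_subdiffE hβ⟩

end Prox

theorem stationary_iff_prox_general {H : Type*} [NormedAddCommGroup H] [InnerProductSpace ℝ H]
    (f g : H → EReal) (h' : H → H) (β : ℝ) (hβ : 0 < β)
    (hfp : ProperE f) (hfconv : ConvexE f)
    (hgp : ProperE g) (hgconv : ConvexE g)
    (x : H) :
    StationaryPt f g h' x ↔
      ∃ y : H, IsProx β f y x ∧ IsProx β g ((2 : ℝ) • x - y + β • h' x) x := by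
  simp only [StationaryPt, isProx_iff_mem_subdiffE hβ hfp hfconv,
    isProx_iff_mem_subdiffE hβ hgp hgconv]
  have hβ₀ : β ≠ 0 := hβ.ne'
  constructor
  · rintro ⟨u, hu, v, hv, huv⟩
    refine ⟨x + β • u, ?_, ?_⟩
    · convert hu using 1
      simp [hβ₀]
    · convert hv using 1
      rw [← sub_eq_zero.mp huv]
      match_scalars <;> field_simp <;> ring
  · rintro ⟨y, hy, hz⟩
    refine ⟨_, hy, _, hz, ?_⟩
    match_scalars <;> field_simp <;> ring

theorem stationary_iff_prox {H : Type*} [NormedAddCommGroup H] [InnerProductSpace ℝ H] [CompleteSpace H]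
    (f g : H → EReal) (h : H → ℝ) (h' : H → H) (β : ℝ) (hβ : 0 < β)
    (hfp : ProperE f) (hflsc : LowerSemicontinuous f) (hfconv : ConvexE f)
    (hgp : ProperE g) (hglsc : LowerSemicontinuous g) (hgconv : ConvexE g)
    (hconv : ConvexOn ℝ Set.univ h)
    (hgrad : ∀ x, HasGradientAt h (h' x) x)
    (x : H) :
    StationaryPt f g h' x ↔
      ∃ y : H, IsProx β f y x ∧ IsProx β g ((2 : ℝ) • x - y + β • h' x) x :=
  stationary_iff_prox_general f g h' β hβ hfp hfconv hgp hgconv x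
end

section
/- Let f, g be proper lsc ρ-strongly convex functions on H and h convex differentiable with L-Lipschitz gradient, β, κ > 0. For u ∈ H, define y = prox_{βf}(u), z = prox_{βg}(2y - u + β∇h(y)), x = u + κ(z - y). Then for any stationary point x̄ of f + g - h, there exists ȳ with x̄ = prox_{βf}(ȳ) and x̄ = prox_{βg}(2x̄ - ȳ + β∇h(x̄)), and ‖x - ȳ‖² ≤ ‖u - ȳ‖² - βκ(2ρ - L)(‖y - x̄‖² + ‖z - x̄‖²) - κ(2 - κ)‖z - y‖². -/
open InnerProductSpace Filter

/-!
Write the stationarity of `xbar` as `a + b = h' xbar` with `a ∈ ∂f xbar`, `b ∈ ∂g xbar`, and put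
`ybar := xbar + β • a`; then `xbar` is the common fixed point of both prox steps. For a
`ρ`-strongly convex function the prox map is strongly monotone,
`β ρ ‖y - y'‖² ≤ ⟪(u - y) - (u' - y'), y - y'⟫`, because the prox objective is
`(ρ + 1/β)`-strongly convex and minimal at `y`. Adding this for `f` at `(u, ybar)` and for `g` at
the two reflected points bounds `⟪u - ybar, y - z⟫` from below by
`β ρ (‖y - xbar‖² + ‖z - xbar‖²) + ‖z - y‖² - β ⟪∇h y - ∇h xbar, z - xbar⟫`; Cauchy–Schwarz and
the Lipschitz bound control the last term by `β L / 2 (‖y - xbar‖² + ‖z - xbar‖²)`, and expanding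
`‖(u - ybar) + κ (z - y)‖²` gives the estimate.
-/

namespace EReal

lemma ne_top_and_toReal_le_of_sub_coe_le {e : EReal} {r R : ℝ} (he : e ≠ ⊥) (h : e - r ≤ R) :
    e ≠ ⊤ ∧ e.toReal ≤ R + r := by
  induction e with
  | bot => exact absurd rfl he
  | top => simp at h
  | coe x =>
    refine ⟨coe_ne_top x, ?_⟩
    have : x - r ≤ R := by exact_mod_cast h
    simp only [toReal_coe]
    linarith

end EReal

section
variable {E : Type*} [NormedAddCommGroup E] [InnerProductSpace ℝ E]

lemma StrongConvexOn.add_sq_le_of_isMinOn {s : Set E} {m : ℝ} {F : E → ℝ} {y v : E}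
    (hF : StrongConvexOn s m F) (hmin : IsMinOn F s y) (hy : y ∈ s) (hv : v ∈ s) :
    F y + m / 2 * ‖v - y‖ ^ 2 ≤ F v := by
  have hseg : ∀ t ∈ Set.Ioo (0 : ℝ) 1, F y + (1 - t) * (m / 2 * ‖v - y‖ ^ 2) ≤ F v := by
    rintro t ⟨ht0, ht1⟩
    have hconv := hF.2 hy hv (sub_nonneg.2 ht1.le) ht0.le (sub_add_cancel 1 t)
    have hmin' := isMinOn_iff.1 hmin _ (hF.1 hy hv (sub_nonneg.2 ht1.le) ht0.le (sub_add_cancel 1 t))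
    rw [norm_sub_rev, smul_eq_mul, smul_eq_mul] at hconv
    have : t * (F y + (1 - t) * (m / 2 * ‖v - y‖ ^ 2) - F v) ≤ 0 := by linarith
    linarith [nonpos_of_mul_nonpos_right this ht0]
  have hcont : Continuous fun t : ℝ => F y + (1 - t) * (m / 2 * ‖v - y‖ ^ 2) := by fun_prop
  refine le_of_tendsto ?_ (eventually_of_mem (Ioo_mem_nhdsGT one_pos) hseg)
  exact (hcont.tendsto' 0 _ (by simp)).mono_left nhdsWithin_le_nhds

lemma strongConvexOn_mul_norm_sub_sq {s : Set E} (hs : Convex ℝ s) (c : ℝ) (u : E) :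
    StrongConvexOn s (2 * c) (fun v => c * ‖v - u‖ ^ 2) := by
  rw [strongConvexOn_iff_convex]
  refine (((-(2 * c)) • innerₛₗ ℝ u).convexOn hs).add_const (c * ‖u‖ ^ 2) |>.congr fun v _ => ?_
  simp only [Pi.add_apply, LinearMap.smul_apply, innerₛₗ_apply_apply, smul_eq_mul, norm_sub_sq_real,
    real_inner_comm u v]
  ring

lemma LipschitzWith.inner_sub_le {K : NNReal} {F : E → E} (hF : LipschitzWith K F) (a b c : E) :
    inner ℝ (F a - F b) c ≤ K / 2 * (‖a - b‖ ^ 2 + ‖c‖ ^ 2) := by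
  have h := hF.norm_sub_le a b
  have := real_inner_le_norm (F a - F b) c
  nlinarith [mul_le_mul_of_nonneg_right h (norm_nonneg c), mul_nonneg K.2 (sq_nonneg (‖a - b‖ - ‖c‖))]

lemma norm_add_smul_sq_le {p d : E} {κ c : ℝ} (hκ : 0 ≤ κ) (h : c + ‖d‖ ^ 2 ≤ -inner ℝ p d) :
    ‖p + κ • d‖ ^ 2 ≤ ‖p‖ ^ 2 - 2 * κ * c - κ * (2 - κ) * ‖d‖ ^ 2 := by
  rw [norm_add_sq_real, real_inner_smul_right, norm_smul, mul_pow, Real.norm_eq_abs, sq_abs]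
  nlinarith

end

section
variable {H : Type*} [NormedAddCommGroup H] {f : H → EReal} {β : ℝ}

lemma IsProx.ne_top (hfp : ProperE f) {u y : H} (hy : IsProx β f u y) : f y ≠ ⊤ := by
  obtain ⟨v, hv⟩ := hfp.2
  intro htop
  have h := hy v
  rw [htop, EReal.top_add_coe, top_le_iff, ← EReal.coe_toReal hv (hfp.1 v), ← EReal.coe_add] at h
  exact EReal.coe_ne_top _ h

lemma IsProx.isMinOn (hfp : ProperE f) {u y : H} (hy : IsProx β f u y) :
    IsMinOn (fun v => (f v).toReal + 1 / (2 * β) * ‖v - u‖ ^ 2) {v | f v ≠ ⊤} y := by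
  refine isMinOn_iff.2 fun v hv => ?_
  have h := hy v
  rw [← EReal.coe_toReal (hy.ne_top hfp) (hfp.1 y), ← EReal.coe_toReal hv (hfp.1 v)] at h
  exact_mod_cast h

variable [InnerProductSpace ℝ H] {ρ : ℝ}

lemma StrongConvexE.strongConvexOn_toReal (hbot : ∀ x, f x ≠ ⊥) (hf : StrongConvexE ρ f) :
    StrongConvexOn {x | f x ≠ ⊤} ρ fun x => (f x).toReal := by
  have key : ∀ ⦃x⦄, f x ≠ ⊤ → ∀ ⦃y⦄, f y ≠ ⊤ → ∀ ⦃a b : ℝ⦄, 0 ≤ a → 0 ≤ b → a + b = 1 →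
      f (a • x + b • y) ≠ ⊤ ∧ (f (a • x + b • y)).toReal - ρ / 2 * ‖a • x + b • y‖ ^ 2 ≤
        a * ((f x).toReal - ρ / 2 * ‖x‖ ^ 2) + b * ((f y).toReal - ρ / 2 * ‖y‖ ^ 2) := by
    intro x hx y hy a b ha hb hab
    have h := hf x y a b ha hb hab
    dsimp only at h
    rw [← EReal.coe_toReal hx (hbot x), ← EReal.coe_toReal hy (hbot y)] at h
    norm_cast at h
    obtain ⟨hne, hle⟩ := EReal.ne_top_and_toReal_le_of_sub_coe_le (hbot _) h
    exact ⟨hne, by linarith⟩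
  rw [strongConvexOn_iff_convex]
  exact ⟨fun x hx y hy a b ha hb hab => (key hx hy ha hb hab).1,
    fun x hx y hy a b ha hb hab => (key hx hy ha hb hab).2⟩

/-- The prox residual `(u - y) / β` is a `ρ`-strong subgradient of `f` at `y = prox_{βf} u`. -/
lemma IsProx.inner_add_sq_le (hβ : 0 < β) (hfp : ProperE f) (hf : StrongConvexE ρ f) {u y v : H}
    (hy : IsProx β f u y) (hv : f v ≠ ⊤) :
    β * (f y).toReal + inner ℝ (u - y) (v - y) + β * ρ / 2 * ‖v - y‖ ^ 2 ≤ β * (f v).toReal := by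
  have hf' := hf.strongConvexOn_toReal hfp.1
  have hF : StrongConvexOn {v | f v ≠ ⊤} (ρ + 2 * (1 / (2 * β)))
      fun v => (f v).toReal + 1 / (2 * β) * ‖v - u‖ ^ 2 :=
    (hf'.add (strongConvexOn_mul_norm_sub_sq hf'.1 (1 / (2 * β)) u)).mono fun r =>
      le_of_eq (by simp only [Pi.add_apply]; ring)
  have hmin := hF.add_sq_le_of_isMinOn (hy.isMinOn hfp) (hy.ne_top hfp) hv
  have hsplit : ‖v - u‖ ^ 2 = ‖v - y‖ ^ 2 - 2 * inner ℝ (u - y) (v - y) + ‖y - u‖ ^ 2 := by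
    rw [show v - u = (v - y) - (u - y) by abel, norm_sub_sq_real, real_inner_comm,
      norm_sub_rev u y]
  rw [hsplit] at hmin
  field_simp at hmin
  nlinarith

lemma IsProx.strongly_monotone (hβ : 0 < β) (hfp : ProperE f) (hf : StrongConvexE ρ f)
    {u y u' y' : H} (hy : IsProx β f u y) (hy' : IsProx β f u' y') :
    β * ρ * ‖y - y'‖ ^ 2 ≤ inner ℝ ((u - y) - (u' - y')) (y - y') := by
  have h := hy.inner_add_sq_le hβ hfp hf (hy'.ne_top hfp)
  have h' := hy'.inner_add_sq_le hβ hfp hf (hy.ne_top hfp)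
  rw [norm_sub_rev, ← neg_sub y y', inner_neg_right] at h
  rw [inner_sub_left]
  linarith

lemma isProx_add_smul_of_mem_subdiffE (hβ : 0 < β) {x w : H} (hw : w ∈ SubdiffE f x) :
    IsProx β f (x + β • w) x := by
  intro v
  have hquad : 1 / (2 * β) * ‖x - (x + β • w)‖ ^ 2 - inner ℝ (v - x) w
      ≤ 1 / (2 * β) * ‖v - (x + β • w)‖ ^ 2 := by
    rw [show v - (x + β • w) = (v - x) - β • w by abel, sub_add_cancel_left, norm_neg,
      norm_sub_sq_real, real_inner_smul_right]
    field_simp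
    linarith [sq_nonneg ‖v - x‖]
  calc f x + ((1 / (2 * β) * ‖x - (x + β • w)‖ ^ 2 : ℝ) : EReal)
      = f x + ((inner ℝ (v - x) w : ℝ) : EReal)
          + ((1 / (2 * β) * ‖x - (x + β • w)‖ ^ 2 - inner ℝ (v - x) w : ℝ) : EReal) := by
        rw [add_assoc, ← EReal.coe_add, add_sub_cancel]
    _ ≤ f v + ((1 / (2 * β) * ‖x - (x + β • w)‖ ^ 2 - inner ℝ (v - x) w : ℝ) : EReal) :=
        add_le_add (hw v) le_rfl
    _ ≤ f v + ((1 / (2 * β) * ‖v - (x + β • w)‖ ^ 2 : ℝ) : EReal) :=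
        add_le_add le_rfl (EReal.coe_le_coe_iff.2 hquad)

end

theorem dr_one_step_fejer_general {H : Type*} [NormedAddCommGroup H] [InnerProductSpace ℝ H]
    (f g : H → EReal) (h' : H → H) (ρ L β κ : ℝ)
    (hL : 0 < L) (hβ : 0 < β) (hκ : 0 < κ)
    (hfp : ProperE f) (hfsc : StrongConvexE ρ f)
    (hgp : ProperE g) (hgsc : StrongConvexE ρ g)
    (hlip : LipschitzWith (Real.toNNReal L) h')
    (u y z x xbar : H)
    (hy : IsProx β f u y)
    (hz : IsProx β g ((2 : ℝ) • y - u + β • h' y) z)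
    (hx : x = u + κ • (z - y))
    (hxbar : StationaryPt f g h' xbar) :
    ∃ ybar : H, IsProx β f ybar xbar ∧
      IsProx β g ((2 : ℝ) • xbar - ybar + β • h' xbar) xbar ∧
      ‖x - ybar‖ ^ 2 ≤ ‖u - ybar‖ ^ 2
        - β * κ * (2 * ρ - L) * (‖y - xbar‖ ^ 2 + ‖z - xbar‖ ^ 2)
        - κ * (2 - κ) * ‖z - y‖ ^ 2 := by
  obtain ⟨a, ha, b, hb, hab⟩ := hxbar
  set ybar := xbar + β • a
  have hproxf : IsProx β f ybar xbar := isProx_add_smul_of_mem_subdiffE hβ ha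
  have hproxg : IsProx β g ((2 : ℝ) • xbar - ybar + β • h' xbar) xbar := by
    rw [← sub_eq_zero.1 hab]
    convert isProx_add_smul_of_mem_subdiffE hβ hb using 1
    module
  refine ⟨ybar, hproxf, hproxg, ?_⟩
  have hmf := hy.strongly_monotone hβ hfp hfsc hproxf
  have hmg := hz.strongly_monotone hβ hgp hgsc hproxg
  have hlip' := hlip.inner_sub_le y xbar (z - xbar)
  rw [Real.coe_toNNReal L hL.le] at hlip'
  have hkey : β * (ρ - L / 2) * (‖y - xbar‖ ^ 2 + ‖z - xbar‖ ^ 2) + ‖z - y‖ ^ 2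
      ≤ -inner ℝ (u - ybar) (z - y) := by
    rw [show (u - y) - (ybar - xbar) = (u - ybar) - (y - xbar) by abel, inner_sub_left,
      real_inner_self_eq_norm_sq] at hmf
    rw [show ((2 : ℝ) • y - u + β • h' y - z) - ((2 : ℝ) • xbar - ybar + β • h' xbar - xbar)
        = (2 : ℝ) • (y - xbar) - (u - ybar) + β • (h' y - h' xbar) - (z - xbar) by module,
      inner_sub_left, inner_add_left, inner_sub_left, real_inner_smul_left, real_inner_smul_left,
      real_inner_self_eq_norm_sq] at hmg
    rw [show z - y = (z - xbar) - (y - xbar) by abel, inner_sub_right (u - ybar),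
      norm_sub_sq_real (z - xbar), real_inner_comm (y - xbar) (z - xbar)]
    linarith [mul_le_mul_of_nonneg_left hlip' hβ.le]
  rw [hx, add_sub_right_comm]
  linear_combination norm_add_smul_sq_le hκ.le hkey

theorem dr_one_step_fejer {H : Type*} [NormedAddCommGroup H] [InnerProductSpace ℝ H] [CompleteSpace H]
    (f g : H → EReal) (h : H → ℝ) (h' : H → H) (ρ L β κ : ℝ)
    (hρ : 0 < ρ) (hL : 0 < L) (hβ : 0 < β) (hκ : 0 < κ)
    (hfp : ProperE f) (hflsc : LowerSemicontinuous f) (hfsc : StrongConvexE ρ f)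
    (hgp : ProperE g) (hglsc : LowerSemicontinuous g) (hgsc : StrongConvexE ρ g)
    (hconv : ConvexOn ℝ Set.univ h)
    (hgrad : ∀ w, HasGradientAt h (h' w) w)
    (hlip : LipschitzWith (Real.toNNReal L) h')
    (u y z x xbar : H)
    (hy : IsProx β f u y)
    (hz : IsProx β g ((2 : ℝ) • y - u + β • h' y) z)
    (hx : x = u + κ • (z - y))
    (hxbar : StationaryPt f g h' xbar) :
    ∃ ybar : H, IsProx β f ybar xbar ∧
      IsProx β g ((2 : ℝ) • xbar - ybar + β • h' xbar) xbar ∧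
      ‖x - ybar‖ ^ 2 ≤ ‖u - ybar‖ ^ 2
        - β * κ * (2 * ρ - L) * (‖y - xbar‖ ^ 2 + ‖z - xbar‖ ^ 2)
        - κ * (2 - κ) * ‖z - y‖ ^ 2 :=
  dr_one_step_fejer_general f g h' ρ L β κ hL hβ hκ hfp hfsc hgp hgsc hlip u y z x xbar hy hz hx
    hxbar
end

section
/- Let h : H → ℝ be convex differentiable with L-Lipschitz gradient, and let z, x̄, y, plus ρ-strong monotonicity hold in the sense that ρ‖z - x̄‖² ≤ ⟨z - x̄, ∇h(y) - ∇h(x̄) + (1/β)(2y - z - u) - (1/β)(x̄ - ȳ)⟩ for β > 0. Then 2⟨u - ȳ, z - x̄⟩ ≤ (βL - 2βρ)‖z - x̄‖² + (2 + βL)‖y - x̄‖² - 2‖z - y‖². -/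
open InnerProductSpace Filter

/-!
Multiplying the hypothesis by `β`, the cross term `⟪u - ybar, z - xbar⟫` is bounded by
`β ⟪z - xbar, h' y - h' xbar⟫ + ⟪z - xbar, 2y - z - xbar⟫ - βρ‖z - xbar‖²`. The gradient term is
at most `βL/2 (‖z - xbar‖² + ‖y - xbar‖²)` by Cauchy–Schwarz, the Lipschitz bound and AM-GM, and
since `z - xbar = (y - xbar) - (y - z)` and `2y - z - xbar = (y - xbar) + (y - z)`, the middle term
equals `‖y - xbar‖² - ‖z - y‖²` exactly.
-/

section InnerProduct

variable {E : Type*} [NormedAddCommGroup E] [InnerProductSpace ℝ E]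

theorem real_inner_sub_add_eq_norm_sq_sub_norm_sq (x y : E) :
    inner ℝ (x - y) (x + y) = ‖x‖ ^ 2 - ‖y‖ ^ 2 := by
  rw [inner_sub_left, inner_add_right, inner_add_right, real_inner_comm y x,
    real_inner_self_eq_norm_sq, real_inner_self_eq_norm_sq]
  ring

theorem two_mul_real_inner_sub_le_of_lipschitzWith {F : Type*} [SeminormedAddCommGroup F]
    {K : NNReal} {f : F → E} (hf : LipschitzWith K f) (a : E) (x y : F) :
    2 * inner ℝ a (f y - f x) ≤ K * (‖a‖ ^ 2 + ‖y - x‖ ^ 2) := by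
  have hfyx : ‖f y - f x‖ ≤ K * ‖y - x‖ := by
    simpa only [dist_eq_norm] using hf.dist_le_mul y x
  calc 2 * inner ℝ a (f y - f x) ≤ 2 * (‖a‖ * (K * ‖y - x‖)) := by
        gcongr
        exact (real_inner_le_norm _ _).trans (by gcongr)
    _ = K * (2 * ‖a‖ * ‖y - x‖) := by ring
    _ ≤ K * (‖a‖ ^ 2 + ‖y - x‖ ^ 2) := by gcongr; exact two_mul_le_add_sq _ _

end InnerProduct

theorem cross_term_estimate_general {H : Type*} [NormedAddCommGroup H] [InnerProductSpace ℝ H]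
    (h' : H → H) (L ρ β : ℝ) (hL : 0 < L) (hβ : 0 < β)
    (hlip : LipschitzWith (Real.toNNReal L) h')
    (u ybar z y xbar : H)
    (hmono : ρ * ‖z - xbar‖ ^ 2
        ≤ (inner ℝ (z - xbar)
            (h' y - h' xbar + (1 / β) • ((2 : ℝ) • y - z - u) - (1 / β) • (xbar - ybar)) : ℝ)) :
    2 * (inner ℝ (u - ybar) (z - xbar) : ℝ)
      ≤ (β * L - 2 * β * ρ) * ‖z - xbar‖ ^ 2 + (2 + β * L) * ‖y - xbar‖ ^ 2
        - 2 * ‖z - y‖ ^ 2 := by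
  have hlip_bound :
      2 * inner ℝ (z - xbar) (h' y - h' xbar) ≤ L * (‖z - xbar‖ ^ 2 + ‖y - xbar‖ ^ 2) := by
    simpa only [Real.coe_toNNReal L hL.le] using
      two_mul_real_inner_sub_le_of_lipschitzWith hlip (z - xbar) xbar y
  have hpolar : inner ℝ (z - xbar) ((2 : ℝ) • y - z - xbar) = ‖y - xbar‖ ^ 2 - ‖z - y‖ ^ 2 := by
    rw [← norm_neg (z - y), ← real_inner_sub_add_eq_norm_sq_sub_norm_sq]
    congr 1 <;> module
  have hsplit : h' y - h' xbar + (1 / β) • ((2 : ℝ) • y - z - u) - (1 / β) • (xbar - ybar)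
      = (h' y - h' xbar) + (1 / β) • (((2 : ℝ) • y - z - xbar) - (u - ybar)) := by
    module
  rw [hsplit, inner_add_right, real_inner_smul_right,
    inner_sub_right (z - xbar) ((2 : ℝ) • y - z - xbar), hpolar] at hmono
  have hscaled := mul_le_mul_of_nonneg_left hmono hβ.le
  rw [mul_add, ← mul_assoc β (1 / β), mul_one_div_cancel hβ.ne', one_mul] at hscaled
  have hlip_scaled := mul_le_mul_of_nonneg_left hlip_bound hβ.le
  rw [real_inner_comm]
  linarith

theorem cross_term_estimate {H : Type*} [NormedAddCommGroup H] [InnerProductSpace ℝ H] [CompleteSpace H]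
    (h : H → ℝ) (h' : H → H) (L ρ β : ℝ) (hL : 0 < L) (hρ : 0 < ρ) (hβ : 0 < β)
    (hconv : ConvexOn ℝ Set.univ h)
    (hgrad : ∀ w, HasGradientAt h (h' w) w)
    (hlip : LipschitzWith (Real.toNNReal L) h')
    (u ybar z y xbar : H)
    (hmono : ρ * ‖z - xbar‖ ^ 2
        ≤ (inner ℝ (z - xbar)
            (h' y - h' xbar + (1 / β) • ((2 : ℝ) • y - z - u) - (1 / β) • (xbar - ybar)) : ℝ)) :
    2 * (inner ℝ (u - ybar) (z - xbar) : ℝ)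
      ≤ (β * L - 2 * β * ρ) * ‖z - xbar‖ ^ 2 + (2 + β * L) * ‖y - xbar‖ ^ 2
        - 2 * ‖z - y‖ ^ 2 :=
  cross_term_estimate_general h' L ρ β hL hβ hlip u ybar z y xbar hmono
end

section
/- Let K be a nonempty subset of a real Hilbert space H and (xₙ) a bounded sequence in H such that (i) lim ‖xₙ - x‖ exists for every x ∈ K, and (ii) every weak cluster point of (xₙ) lies in K. Then (xₙ) converges weakly to a point of K. -/
open InnerProductSpace Filter

/-! Bounded sequences in a Hilbert space are weakly sequentially compact, so it suffices that
any two weak cluster points `p q` coincide; both lie in `K`. The polarization identity turns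
convergence of `‖xₙ - p‖` and `‖xₙ - q‖` into convergence of `⟪p - q, xₙ⟫`, whose limit is then
both `⟪p - q, p⟫` and `⟪p - q, q⟫`, so `‖p - q‖² = 0`. -/

open scoped RealInnerProductSpace

section WeakTendsto

variable {E F : Type*} [NormedAddCommGroup E] [InnerProductSpace ℝ E]
  [NormedAddCommGroup F] [InnerProductSpace ℝ F]

theorem WeakTendsto.map {y : ℕ → E} {p : E} (h : WeakTendsto y p) (T : E →L[ℝ] F) :
    WeakTendsto (T ∘ y) (T p) :=
  fun ψ => h (ψ.comp T)

theorem WeakTendsto.inner_left {y : ℕ → E} {p : E} (h : WeakTendsto y p) (v : E) :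
    Tendsto (fun n => ⟪v, y n⟫) atTop (nhds ⟪v, p⟫) :=
  h (innerSL ℝ v)

theorem exists_subseq_weakTendsto_of_separableSpace [CompleteSpace E]
    [TopologicalSpace.SeparableSpace E] {y : ℕ → E} {M : ℝ} (hM : ∀ n, ‖y n‖ ≤ M) :
    ∃ p, ∃ φ : ℕ → ℕ, StrictMono φ ∧ WeakTendsto (y ∘ φ) p := by
  let f : ℕ → WeakDual ℝ E := fun n => toDual ℝ E (y n)
  have hf : ∀ n, f n ∈ WeakDual.toStrongDual ⁻¹' Metric.closedBall 0 M := fun n =>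
    mem_closedBall_zero_iff.2 (((toDual ℝ E).norm_map _).trans_le (hM n))
  obtain ⟨f₀, -, φ, hφ, hlim⟩ := WeakDual.isSeqCompact_closedBall ℝ E 0 M hf
  refine ⟨(toDual ℝ E).symm f₀, φ, hφ, fun ψ => ?_⟩
  -- Riesz: `ψ = ⟪u, ·⟫`, so `ψ (y n)` is the weak-* evaluation of `f n` at `u`.
  set u := (toDual ℝ E).symm ψ
  have hψ : ∀ z, ψ z = ⟪z, u⟫ := fun z => by rw [real_inner_comm, toDual_symm_apply]
  have hf₀ : ⟪(toDual ℝ E).symm f₀, u⟫ = f₀ u := toDual_symm_apply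
  simp only [Function.comp_apply, hψ, hf₀]
  exact ((WeakDual.eval_continuous u).tendsto f₀).comp hlim

/-- The closed span of the sequence is separable, so sequential Banach–Alaoglu applies there. -/
theorem exists_subseq_weakTendsto [CompleteSpace E] {y : ℕ → E} {M : ℝ}
    (hM : ∀ n, ‖y n‖ ≤ M) : ∃ p, ∃ φ : ℕ → ℕ, StrictMono φ ∧ WeakTendsto (y ∘ φ) p := by
  set V := (Submodule.span ℝ (Set.range y)).topologicalClosure
  have : TopologicalSpace.SeparableSpace V :=
    (Set.countable_range y).isSeparable.span.closure.separableSpace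
  have : CompleteSpace V := (Submodule.isClosed_topologicalClosure _).completeSpace_coe
  let z : ℕ → V := fun n =>
    ⟨y n, Submodule.le_topologicalClosure _ (Submodule.subset_span ⟨n, rfl⟩)⟩
  obtain ⟨p, φ, hφ, hp⟩ := exists_subseq_weakTendsto_of_separableSpace (y := z) hM
  exact ⟨p, φ, hφ, hp.map V.subtypeL⟩

theorem weakTendsto_of_forall_subseq [CompleteSpace E] {y : ℕ → E} {M : ℝ}
    (hM : ∀ n, ‖y n‖ ≤ M) {p : E}
    (h : ∀ q (φ : ℕ → ℕ), StrictMono φ → WeakTendsto (y ∘ φ) q → q = p) :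
    WeakTendsto y p := by
  intro ψ
  refine tendsto_of_subseq_tendsto fun ns hns => ?_
  obtain ⟨ms, -, hms⟩ := strictMono_subseq_of_tendsto_atTop hns
  obtain ⟨q, φ, hφ, hq⟩ := exists_subseq_weakTendsto (y := y ∘ ns ∘ ms) fun n => hM _
  obtain rfl : q = p := h q (ns ∘ ms ∘ φ) (hms.comp hφ) hq
  exact ⟨ms ∘ φ, hq ψ⟩

theorem tendsto_inner_sub_of_tendsto_norm_sub {ι : Type*} {l : Filter ι} {y : ι → E}
    {z₁ z₂ : E} {l₁ l₂ : ℝ} (h₁ : Tendsto (fun n => ‖y n - z₁‖) l (nhds l₁))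
    (h₂ : Tendsto (fun n => ‖y n - z₂‖) l (nhds l₂)) :
    Tendsto (fun n => ⟪z₁ - z₂, y n⟫) l (nhds ((l₂ ^ 2 - l₁ ^ 2 - ‖z₂‖ ^ 2 + ‖z₁‖ ^ 2) / 2)) := by
  have polarization : ∀ n, ⟪z₁ - z₂, y n⟫ =
      (‖y n - z₂‖ ^ 2 - ‖y n - z₁‖ ^ 2 - ‖z₂‖ ^ 2 + ‖z₁‖ ^ 2) / 2 := fun n => by
    rw [norm_sub_sq_real, norm_sub_sq_real, inner_sub_left, real_inner_comm z₁,
      real_inner_comm z₂]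
    ring
  simp only [polarization]
  exact ((((h₂.pow 2).sub (h₁.pow 2)).sub_const _).add_const _).div_const 2

theorem eq_of_weakTendsto_of_tendsto_inner_sub {y : ℕ → E} {p q : E} {c : ℝ}
    (hc : Tendsto (fun n => ⟪p - q, y n⟫) atTop (nhds c)) {φ ψ : ℕ → ℕ}
    (hφ : Tendsto φ atTop atTop) (hψ : Tendsto ψ atTop atTop)
    (hp : WeakTendsto (y ∘ φ) p) (hq : WeakTendsto (y ∘ ψ) q) : p = q := by
  have hpc : ⟪p - q, p⟫ = c := tendsto_nhds_unique (hp.inner_left _) (hc.comp hφ)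
  have hqc : ⟪p - q, q⟫ = c := tendsto_nhds_unique (hq.inner_left _) (hc.comp hψ)
  rw [← sub_eq_zero, ← inner_self_eq_zero (𝕜 := ℝ), inner_sub_right, hpc, hqc, sub_self]

end WeakTendsto

theorem opial_lemma_general {H : Type*} [NormedAddCommGroup H] [InnerProductSpace ℝ H]
    [CompleteSpace H]
    (K : Set H) (x : ℕ → H)
    (hbdd : ∃ M : ℝ, ∀ n, ‖x n‖ ≤ M)
    (hlim : ∀ z ∈ K, ∃ l : ℝ, Tendsto (fun n => ‖x n - z‖) atTop (nhds l))
    (hcluster : ∀ p : H, (∃ φ : ℕ → ℕ, StrictMono φ ∧ WeakTendsto (x ∘ φ) p) → p ∈ K) :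
    ∃ p ∈ K, WeakTendsto x p := by
  obtain ⟨M, hM⟩ := hbdd
  obtain ⟨p, φ, hφ, hp⟩ := exists_subseq_weakTendsto hM
  have hpK : p ∈ K := hcluster p ⟨φ, hφ, hp⟩
  refine ⟨p, hpK, weakTendsto_of_forall_subseq hM fun q ψ hψ hq => ?_⟩
  have hqK : q ∈ K := hcluster q ⟨ψ, hψ, hq⟩
  obtain ⟨l₁, hl₁⟩ := hlim q hqK
  obtain ⟨l₂, hl₂⟩ := hlim p hpK
  exact eq_of_weakTendsto_of_tendsto_inner_sub (tendsto_inner_sub_of_tendsto_norm_sub hl₁ hl₂)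
    hψ.tendsto_atTop hφ.tendsto_atTop hq hp

theorem opial_lemma {H : Type*} [NormedAddCommGroup H] [InnerProductSpace ℝ H]
    [CompleteSpace H]
    (K : Set H) (hK : K.Nonempty) (x : ℕ → H)
    (hbdd : ∃ M : ℝ, ∀ n, ‖x n‖ ≤ M)
    (hlim : ∀ z ∈ K, ∃ l : ℝ, Tendsto (fun n => ‖x n - z‖) atTop (nhds l))
    (hcluster : ∀ p : H, (∃ φ : ℕ → ℕ, StrictMono φ ∧ WeakTendsto (x ∘ φ) p) → p ∈ K) :
    ∃ p ∈ K, WeakTendsto x p :=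
  opial_lemma_general K x hbdd hlim hcluster
end
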